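/- arXiv:1906.08386 — 4 statements merged into one kernel-verified Lean document; each statement's English description precedes it below -/
import Mathlib

section
/- Let μ₀ and μ₁ be probability measures on a measurable space Ω (the group-conditional data distributions), let Y : Ω → ℝ be a measurable label taking values in {0,1}, and let Ŷ : Ω → ℝ be a measurable predictor taking values in {0,1}. If Ŷ satisfies demographic parity, i.e., μ₀{Ŷ = 1} = μ₁{Ŷ = 1}, then err₀(Ŷ) + err₁(Ŷ) ≥ |μ₀{Y = 1} − μ₁{Y = 1}|. -/
/-!
For 0/1-valued `Y` and `Ŷ`, the error on a group dominates the gap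
`|μ{Y = 1} - μ{Ŷ = 1}| = |∫ (Y - Ŷ) dμ|`. Demographic parity makes `μ{Ŷ = 1}` the same for
both groups, so the triangle inequality through this common value bounds the base-rate gap
by the sum of the two errors.
-/

open MeasureTheory

section ZeroOneValued

variable {Ω : Type*} {f g : Ω → ℝ}

theorem eq_indicator_one_of_zero_or_one (hf01 : ∀ ω, f ω = 0 ∨ f ω = 1) :
    f = {ω | f ω = 1}.indicator 1 := by
  funext ω
  rcases hf01 ω with h | h <;> simp [Set.indicator, h]

variable [MeasurableSpace Ω] {μ : Measure Ω}

theorem integrable_of_zero_or_one [IsFiniteMeasure μ] (hf : Measurable f)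
    (hf01 : ∀ ω, f ω = 0 ∨ f ω = 1) : Integrable f μ := by
  rw [eq_indicator_one_of_zero_or_one hf01]
  exact (integrable_const 1).indicator (hf (measurableSet_singleton 1))

theorem integral_eq_measureReal_of_zero_or_one (hf : Measurable f)
    (hf01 : ∀ ω, f ω = 0 ∨ f ω = 1) : ∫ ω, f ω ∂μ = μ.real {ω | f ω = 1} := by
  conv_lhs => rw [eq_indicator_one_of_zero_or_one hf01]
  exact integral_indicator_one (hf (measurableSet_singleton 1))

theorem abs_measureReal_sub_le_integral_abs_sub_of_zero_or_one [IsFiniteMeasure μ]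
    (hf : Measurable f) (hg : Measurable g)
    (hf01 : ∀ ω, f ω = 0 ∨ f ω = 1) (hg01 : ∀ ω, g ω = 0 ∨ g ω = 1) :
    |μ.real {ω | f ω = 1} - μ.real {ω | g ω = 1}| ≤ ∫ ω, |f ω - g ω| ∂μ := by
  rw [← integral_eq_measureReal_of_zero_or_one hf hf01,
    ← integral_eq_measureReal_of_zero_or_one hg hg01,
    ← integral_sub (integrable_of_zero_or_one hf hf01) (integrable_of_zero_or_one hg hg01)]
  exact abs_integral_le_integral_abs

end ZeroOneValued

/-- **Tradeoff between demographic parity and joint utility** (Theorem 3.1).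
If the predictor `Yhat` satisfies demographic parity, then the sum of the
group-wise errors is at least the base-rate gap between the two groups. -/
theorem fairness_lower_bound_demographic_parity
    {Ω : Type*} [MeasurableSpace Ω]
    (μ₀ μ₁ : Measure Ω) [IsProbabilityMeasure μ₀] [IsProbabilityMeasure μ₁]
    (Y Yhat : Ω → ℝ) (hY : Measurable Y) (hYhat : Measurable Yhat)
    (hY01 : ∀ ω, Y ω = 0 ∨ Y ω = 1) (hYhat01 : ∀ ω, Yhat ω = 0 ∨ Yhat ω = 1)
    (hDP : μ₀ {ω | Yhat ω = 1} = μ₁ {ω | Yhat ω = 1}) :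
    (∫ ω, |Y ω - Yhat ω| ∂μ₀) + (∫ ω, |Y ω - Yhat ω| ∂μ₁) ≥
      |(μ₀ {ω | Y ω = 1}).toReal - (μ₁ {ω | Y ω = 1}).toReal| := by
  have hDP' : μ₀.real {ω | Yhat ω = 1} = μ₁.real {ω | Yhat ω = 1} := by
    simp only [measureReal_def, hDP]
  have err₀ := abs_measureReal_sub_le_integral_abs_sub_of_zero_or_one
    (μ := μ₀) hY hYhat hY01 hYhat01
  have err₁ := abs_measureReal_sub_le_integral_abs_sub_of_zero_or_one
    (μ := μ₁) hY hYhat hY01 hYhat01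
  rw [hDP'] at err₀
  calc |μ₀.real {ω | Y ω = 1} - μ₁.real {ω | Y ω = 1}|
      ≤ |μ₀.real {ω | Y ω = 1} - μ₁.real {ω | Yhat ω = 1}|
        + |μ₁.real {ω | Yhat ω = 1} - μ₁.real {ω | Y ω = 1}| := abs_sub_le _ _ _
    _ ≤ (∫ ω, |Y ω - Yhat ω| ∂μ₀) + (∫ ω, |Y ω - Yhat ω| ∂μ₁) := by
      rw [abs_sub_comm (μ₁.real _)]
      exact add_le_add err₀ err₁
end

section
/- Let μ₀ and μ₁ be probability measures on a measurable space Ω, let Y : Ω → ℝ be a measurable label taking values in {0,1}, let g : Ω → 𝒵 be a measurable feature map into a measurable space 𝒵, let h : 𝒵 → ℝ be measurable taking values in {0,1}, and set Ŷ = h ∘ g. If d_JS(g♯μ₀, g♯μ₁) ≤ d_JS(Y♯μ₀, Y♯μ₁), then err₀(Ŷ) + err₁(Ŷ) ≥ (d_JS(Y♯μ₀, Y♯μ₁) − d_JS(g♯μ₀, g♯μ₁))² / 2. -/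
open MeasureTheory
open scoped ENNReal

/-- Kullback–Leibler divergence `KL(P ‖ Q) = ∫ log (dP/dQ) dP`. -/
noncomputable def klDiv {Ω : Type*} [MeasurableSpace Ω] (P Q : Measure Ω) : ℝ :=
  ∫ ω, Real.log ((P.rnDeriv Q ω).toReal) ∂P

/-- Jensen–Shannon divergence
`JSD(P, Q) = (1/2) KL(P ‖ M) + (1/2) KL(Q ‖ M)` where `M = (P + Q)/2`. -/
noncomputable def JSD {Ω : Type*} [MeasurableSpace Ω] (P Q : Measure Ω) : ℝ :=
  (klDiv P ((2 : ℝ≥0∞)⁻¹ • (P + Q)) + klDiv Q ((2 : ℝ≥0∞)⁻¹ • (P + Q))) / 2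

/-- Jensen–Shannon distance `d_JS(P, Q) = √JSD(P, Q)`. -/
noncomputable def dJS {Ω : Type*} [MeasurableSpace Ω] (P Q : Measure Ω) : ℝ :=
  Real.sqrt (JSD P Q)

/-!
Write `pᵢ = μᵢ(Y = 1)` and `qᵢ = μᵢ(Ŷ = 1)` for `Ŷ = h ∘ g`. Both labels are `{0,1}`-valued, so
their laws are Bernoulli and `d_JS(Y♯μ₀, Y♯μ₁) = d(p₀, p₁)`, where `d(p, q)` is the Jensen–Shannon
distance of two Bernoulli laws. Since `d` is a metric on `[0, 1]`,
`d(p₀, p₁) ≤ d(p₀, q₀) + d(q₀, q₁) + d(q₁, p₁) ≤ √err₀ + d_JS(g♯μ₀, g♯μ₁) + √err₁`: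
the outer terms by `d(p, q)² ≤ |p - q| ≤ errᵢ`, the middle one by the data processing inequality
along `h`. Squaring and `(a + b)² ≤ 2(a² + b²)` give the bound.

The triangle inequality for `d` reduces to that for one atom, `√(jsAtom x y)`. The identity
`1 / (t + u) = ∫₀^∞ e^{-(t+u)s} ds` makes `2 jsAtom x y = ∫_x^y ∫_x^y dt du / (t + u)` the squared
`L²(0, ∞)` norm of `s ↦ (e^{-xs} - e^{-ys}) / s`, so `√(jsAtom x y)` is a Hilbert-space distance.
-/

open Real Set

-- the contribution of an atom with masses `x` and `y` to `2 • JSD`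
noncomputable def jsAtom (x y : ℝ) : ℝ := x * log x + y * log y - (x + y) * log ((x + y) / 2)

noncomputable def binJSD (p q : ℝ) : ℝ := (jsAtom p q + jsAtom (1 - p) (1 - q)) / 2

lemma jsAtom_comm (x y : ℝ) : jsAtom x y = jsAtom y x := by
  unfold jsAtom
  ring_nf

lemma continuous_jsAtom : Continuous fun z : ℝ × ℝ => jsAtom z.1 z.2 := by
  have h : Continuous fun x : ℝ => x * log x := continuous_mul_log
  have e : (fun z : ℝ × ℝ => jsAtom z.1 z.2) = fun z => (fun x => x * log x) z.1 +
      (fun x => x * log x) z.2 - 2 * (fun x => x * log x) ((z.1 + z.2) / 2) := by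
    funext z
    simp only [jsAtom]
    ring
  rw [e]
  fun_prop

lemma jsAtom_nonneg {x y : ℝ} (hx : 0 ≤ x) (hy : 0 ≤ y) : 0 ≤ jsAtom x y := by
  have h := convexOn_mul_log.2 (mem_Ici.2 hx) (mem_Ici.2 hy) (by norm_num : (0 : ℝ) ≤ 1/2)
    (by norm_num : (0 : ℝ) ≤ 1/2) (by norm_num)
  simp only [smul_eq_mul] at h
  rw [show 1 / 2 * x + 1 / 2 * y = (x + y) / 2 by ring] at h
  unfold jsAtom
  linarith

lemma mul_log_sub_mul_log_le {x m : ℝ} (hx : 0 ≤ x) (hm : 0 < m) :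
    x * log x - x * log m ≤ x * (x - m) / m := by
  rcases hx.eq_or_lt with rfl | hx
  · simp
  have := log_le_sub_one_of_pos (div_pos hx hm)
  rw [log_div hx.ne' hm.ne'] at this
  rw [mul_div_assoc, ← mul_sub, sub_div, div_self hm.ne']
  exact mul_le_mul_of_nonneg_left this hx.le

-- through the `χ²` bound `jsAtom x y ≤ (x - y)² / (x + y)`
lemma jsAtom_le_abs_sub {x y : ℝ} (hx : 0 ≤ x) (hy : 0 ≤ y) : jsAtom x y ≤ |x - y| := by
  rcases (add_nonneg hx hy).eq_or_lt with hxy | hxy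
  · obtain ⟨rfl, rfl⟩ : x = 0 ∧ y = 0 := ⟨by linarith, by linarith⟩
    simp [jsAtom]
  have hm : 0 < (x + y) / 2 := by positivity
  have h1 := mul_log_sub_mul_log_le hx hm
  have h2 := mul_log_sub_mul_log_le hy hm
  have hchi : x * (x - (x + y) / 2) / ((x + y) / 2) + y * (y - (x + y) / 2) / ((x + y) / 2)
      = (x - y) ^ 2 / (x + y) := by
    field_simp
    ring
  have hsq : (x - y) ^ 2 / (x + y) ≤ |x - y| := by
    have : |x - y| ≤ x + y := abs_sub_le_iff.2 ⟨by linarith, by linarith⟩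
    rw [div_le_iff₀ hxy, ← sq_abs, sq]
    exact mul_le_mul_of_nonneg_left this (abs_nonneg _)
  unfold jsAtom
  linarith

lemma binJSD_le_abs_sub {p q : ℝ} (hp : p ∈ Icc (0 : ℝ) 1) (hq : q ∈ Icc (0 : ℝ) 1) :
    binJSD p q ≤ |p - q| := by
  have h1 := jsAtom_le_abs_sub hp.1 hq.1
  have h2 := jsAtom_le_abs_sub (sub_nonneg.2 hp.2) (sub_nonneg.2 hq.2)
  rw [show 1 - p - (1 - q) = -(p - q) by ring, abs_neg] at h2
  unfold binJSD
  linarith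

lemma binJSD_comm (p q : ℝ) : binJSD p q = binJSD q p := by
  simp only [binJSD, jsAtom_comm p, jsAtom_comm (1 - p)]

lemma mul_log_div_add_mul_log_div {x y : ℝ} (hx : 0 ≤ x) (hy : 0 ≤ y) :
    x * log (x / ((x + y) / 2)) + y * log (y / ((x + y) / 2)) = jsAtom x y := by
  rcases (add_nonneg hx hy).eq_or_lt with hxy | hxy
  · obtain ⟨rfl, rfl⟩ : x = 0 ∧ y = 0 := ⟨by linarith, by linarith⟩
    simp [jsAtom]
  have key : ∀ {t : ℝ}, 0 ≤ t → t * log (t / ((x + y) / 2)) = t * log t - t * log ((x + y) / 2) :=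
    fun {t} ht => by
      rcases ht.eq_or_lt with rfl | ht
      · simp
      · rw [log_div ht.ne' (by positivity), mul_sub]
  rw [key hx, key hy, jsAtom]
  ring

noncomputable def laplaceIcc (x y s : ℝ) : ℝ := (exp (-(x * s)) - exp (-(y * s))) / s

lemma measurable_laplaceIcc (x y : ℝ) : Measurable (laplaceIcc x y) := by
  unfold laplaceIcc
  fun_prop

lemma integral_exp_neg_mul {s : ℝ} (hs : s ≠ 0) (x y : ℝ) :
    ∫ t in x..y, exp (-(t * s)) = laplaceIcc x y s := by
  simp_rw [← mul_neg]
  rw [intervalIntegral.integral_comp_mul_right (fun u => exp u) (neg_ne_zero.2 hs), integral_exp,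
    laplaceIcc, smul_eq_mul, mul_neg, mul_neg, inv_neg]
  ring

lemma lintegral_exp_neg_mul_Ioi {c : ℝ} (hc : 0 < c) :
    ∫⁻ s in Ioi 0, ENNReal.ofReal (exp (-(c * s))) = ENNReal.ofReal c⁻¹ := by
  have h := integral_exp_mul_Ioi (neg_lt_zero.2 hc) 0
  simp only [mul_zero, exp_zero, neg_mul] at h
  rw [← ofReal_integral_eq_lintegral_ofReal, h, neg_div_neg_eq, one_div]
  · simpa only [neg_mul, IntegrableOn] using exp_neg_integrableOn_Ioi 0 hc
  · exact Filter.Eventually.of_forall fun s => (exp_pos _).le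

lemma ofReal_intervalIntegral_eq_lintegral {f : ℝ → ℝ} {a b : ℝ} (hab : a ≤ b)
    (hf : ContinuousOn f (Icc a b)) (hf0 : ∀ t ∈ Icc a b, 0 ≤ f t) :
    ENNReal.ofReal (∫ t in a..b, f t) = ∫⁻ t in Ioc a b, ENNReal.ofReal (f t) := by
  rw [intervalIntegral.integral_of_le hab, ofReal_integral_eq_lintegral_ofReal
    (hf.integrableOn_Icc.mono_set Ioc_subset_Icc_self)]
  exact (ae_restrict_iff' measurableSet_Ioc).2
    (Filter.Eventually.of_forall fun t ht => hf0 t (Ioc_subset_Icc_self ht))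

lemma integral_inv_add {t a b : ℝ} (ha : 0 < t + a) (hb : 0 < t + b) :
    ∫ u in a..b, (t + u)⁻¹ = log (t + b) - log (t + a) := by
  rw [intervalIntegral.integral_comp_add_left (fun u => u⁻¹), integral_inv_of_pos ha hb,
    log_div hb.ne' ha.ne']

lemma integral_log_add_sub_log_add {a b : ℝ} (ha : 0 < a) (hb : 0 < b) :
    ∫ t in a..b, (log (t + b) - log (t + a)) = 2 * jsAtom a b := by
  have hint : ∀ c, IntervalIntegrable (fun t => log (t + c)) volume a b := fun c => by
    simpa using
      (intervalIntegral.intervalIntegrable_log' (a := a + c) (b := b + c)).comp_add_right c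
  rw [intervalIntegral.integral_sub (hint b) (hint a),
    intervalIntegral.integral_comp_add_right, intervalIntegral.integral_comp_add_right,
    integral_log, integral_log, jsAtom, ← two_mul, ← two_mul, log_mul two_ne_zero ha.ne',
    log_mul two_ne_zero hb.ne', log_div (by positivity) two_ne_zero, add_comm b a]
  ring

lemma ofReal_laplaceIcc_sq {a b s : ℝ} (hab : a ≤ b) (hs : 0 < s) :
    ENNReal.ofReal (laplaceIcc a b s ^ 2) =
      ∫⁻ t in Ioc a b, ∫⁻ u in Ioc a b, ENNReal.ofReal (exp (-((t + u) * s))) := by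
  have hmeas : Measurable fun t : ℝ => ENNReal.ofReal (exp (-(t * s))) := by fun_prop
  have hL : ENNReal.ofReal (laplaceIcc a b s) =
      ∫⁻ t in Ioc a b, ENNReal.ofReal (exp (-(t * s))) := by
    rw [← integral_exp_neg_mul hs.ne', ofReal_intervalIntegral_eq_lintegral hab (by fun_prop)
      fun t _ => (exp_pos _).le]
  have hL0 : 0 ≤ laplaceIcc a b s := by
    rw [← integral_exp_neg_mul hs.ne']
    exact intervalIntegral.integral_nonneg hab fun t _ => (exp_pos _).le
  rw [sq, ENNReal.ofReal_mul hL0, hL, ← lintegral_mul_const _ hmeas]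
  refine lintegral_congr fun t => ?_
  rw [← lintegral_const_mul _ hmeas]
  refine lintegral_congr fun u => ?_
  rw [← ENNReal.ofReal_mul (exp_pos _).le, ← exp_add, add_mul, neg_add]

lemma lintegral_laplaceIcc_sq {a b : ℝ} (ha : 0 < a) (hab : a ≤ b) :
    ∫⁻ s in Ioi 0, ENNReal.ofReal (laplaceIcc a b s ^ 2) = ENNReal.ofReal (2 * jsAtom a b) := by
  have hb : 0 < b := ha.trans_le hab
  calc ∫⁻ s in Ioi 0, ENNReal.ofReal (laplaceIcc a b s ^ 2)
      = ∫⁻ s in Ioi 0, ∫⁻ t in Ioc a b, ∫⁻ u in Ioc a b, ENNReal.ofReal (exp (-((t + u) * s))) :=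
        setLIntegral_congr_fun measurableSet_Ioi fun s hs => ofReal_laplaceIcc_sq hab hs
    _ = ∫⁻ t in Ioc a b, ∫⁻ u in Ioc a b, ∫⁻ s in Ioi 0, ENNReal.ofReal (exp (-((t + u) * s))) := by
        rw [lintegral_lintegral_swap]
        · refine lintegral_congr fun t => lintegral_lintegral_swap ?_
          exact Measurable.aemeasurable (by fun_prop)
        · refine Measurable.aemeasurable (Measurable.lintegral_prod_right'
            (f := fun p : (ℝ × ℝ) × ℝ => ENNReal.ofReal (exp (-((p.1.2 + p.2) * p.1.1)))) ?_)
          fun_prop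
    _ = ∫⁻ t in Ioc a b, ∫⁻ u in Ioc a b, ENNReal.ofReal (t + u)⁻¹ := by
        refine setLIntegral_congr_fun measurableSet_Ioc fun t ht =>
          setLIntegral_congr_fun measurableSet_Ioc fun u hu => ?_
        exact lintegral_exp_neg_mul_Ioi (by linarith [ht.1, hu.1])
    _ = ∫⁻ t in Ioc a b, ENNReal.ofReal (log (t + b) - log (t + a)) := by
        refine setLIntegral_congr_fun measurableSet_Ioc fun t ht => ?_
        rw [← integral_inv_add (by linarith [ht.1]) (by linarith [ht.1]),
          ofReal_intervalIntegral_eq_lintegral hab]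
        · exact ContinuousOn.inv₀ (by fun_prop) fun u hu => by linarith [ht.1, hu.1]
        · exact fun u hu => inv_nonneg.2 (by linarith [ht.1, hu.1])
    _ = ENNReal.ofReal (2 * jsAtom a b) := by
        rw [← integral_log_add_sub_log_add ha hb, ofReal_intervalIntegral_eq_lintegral hab]
        · exact ContinuousOn.sub (ContinuousOn.log (by fun_prop) fun t ht => by linarith [ht.1])
            (ContinuousOn.log (by fun_prop) fun t ht => by linarith [ht.1])
        · exact fun t ht => sub_nonneg.2 (log_le_log (by linarith [ht.1]) (by linarith))

lemma eLpNorm_laplaceIcc {x y : ℝ} (hx : 0 < x) (hy : 0 < y) :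
    eLpNorm (laplaceIcc x y) 2 (volume.restrict (Ioi 0)) = ENNReal.ofReal √(2 * jsAtom x y) := by
  have hsq : ∫⁻ s in Ioi 0, ‖laplaceIcc x y s‖ₑ ^ (2 : ℝ) = ENNReal.ofReal (2 * jsAtom x y) := by
    have h : ∀ s, ‖laplaceIcc x y s‖ₑ ^ (2 : ℝ) = ENNReal.ofReal (laplaceIcc x y s ^ 2) :=
      fun s => by
        rw [enorm_eq_ofReal_abs, ENNReal.ofReal_rpow_of_nonneg (abs_nonneg _) zero_le_two,
          rpow_two, sq_abs]
    simp_rw [h]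
    rcases le_total x y with hxy | hyx
    · exact lintegral_laplaceIcc_sq hx hxy
    · have hswap : ∀ s, laplaceIcc x y s ^ 2 = laplaceIcc y x s ^ 2 := fun s => by
        simp only [laplaceIcc]
        ring
      simp_rw [hswap, jsAtom_comm x y]
      exact lintegral_laplaceIcc_sq hy hyx
  rw [eLpNorm_eq_lintegral_rpow_enorm_toReal two_ne_zero ENNReal.ofNat_ne_top, ENNReal.toReal_ofNat,
    hsq, ENNReal.ofReal_rpow_of_nonneg (by linarith [jsAtom_nonneg hx.le hy.le]) (by norm_num),
    sqrt_eq_rpow]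

lemma sqrt_jsAtom_triangle_of_pos {x y z : ℝ} (hx : 0 < x) (hy : 0 < y) (hz : 0 < z) :
    √(jsAtom x z) ≤ √(jsAtom x y) + √(jsAtom y z) := by
  have hsplit : laplaceIcc x z = laplaceIcc x y + laplaceIcc y z := by
    funext s
    simp only [laplaceIcc, Pi.add_apply]
    ring
  have h := eLpNorm_add_le (μ := volume.restrict (Ioi 0)) (p := 2)
    (f := laplaceIcc x y) (g := laplaceIcc y z) (measurable_laplaceIcc x y).aestronglyMeasurable
    (measurable_laplaceIcc y z).aestronglyMeasurable one_le_two
  rw [← hsplit, eLpNorm_laplaceIcc hx hz, eLpNorm_laplaceIcc hx hy, eLpNorm_laplaceIcc hy hz,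
    ← ENNReal.ofReal_add (sqrt_nonneg _) (sqrt_nonneg _),
    ENNReal.ofReal_le_ofReal_iff (by positivity)] at h
  simp only [sqrt_mul zero_le_two, ← mul_add] at h
  exact le_of_mul_le_mul_left h (by positivity)

lemma sqrt_jsAtom_triangle {x y z : ℝ} (hx : 0 ≤ x) (hy : 0 ≤ y) (hz : 0 ≤ z) :
    √(jsAtom x z) ≤ √(jsAtom x y) + √(jsAtom y z) := by
  have hlim : ∀ u v : ℝ, Filter.Tendsto (fun ε => √(jsAtom (u + ε) (v + ε)))
      (nhdsWithin 0 (Ioi 0)) (nhds √(jsAtom u v)) := fun u v => by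
    have hc : Continuous fun ε : ℝ => √(jsAtom (u + ε) (v + ε)) :=
      continuous_sqrt.comp (continuous_jsAtom.comp
        ((continuous_const.add continuous_id).prodMk (continuous_const.add continuous_id)))
    simpa using (hc.tendsto 0).mono_left nhdsWithin_le_nhds
  refine le_of_tendsto_of_tendsto (hlim x z) ((hlim x y).add (hlim y z)) ?_
  filter_upwards [self_mem_nhdsWithin] with ε (hε : 0 < ε)
  exact sqrt_jsAtom_triangle_of_pos (by linarith) (by linarith) (by linarith)

lemma sqrt_add_sq_add_sq_le (a b c d : ℝ) :
    √((a + b) ^ 2 + (c + d) ^ 2) ≤ √(a ^ 2 + c ^ 2) + √(b ^ 2 + d ^ 2) := by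
  have := norm_add_le (!₂[a, c] : EuclideanSpace ℝ (Fin 2)) !₂[b, d]
  simpa [EuclideanSpace.norm_eq, Fin.sum_univ_two] using this

lemma jsAtom_le_sq_sqrt_add {x y z : ℝ} (hx : 0 ≤ x) (hy : 0 ≤ y) (hz : 0 ≤ z) :
    jsAtom x z ≤ (√(jsAtom x y) + √(jsAtom y z)) ^ 2 :=
  (sqrt_le_left (by positivity)).1 (sqrt_jsAtom_triangle hx hy hz)

lemma sqrt_binJSD_triangle {p q r : ℝ} (hp : p ∈ Icc (0 : ℝ) 1) (hq : q ∈ Icc (0 : ℝ) 1)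
    (hr : r ∈ Icc (0 : ℝ) 1) : √(binJSD p r) ≤ √(binJSD p q) + √(binJSD q r) := by
  have hp' : 0 ≤ 1 - p := sub_nonneg.2 hp.2
  have hq' : 0 ≤ 1 - q := sub_nonneg.2 hq.2
  have hr' : 0 ≤ 1 - r := sub_nonneg.2 hr.2
  have hsq : ∀ {x y : ℝ}, 0 ≤ x → 0 ≤ y → √(jsAtom x y) ^ 2 = jsAtom x y :=
    fun hx hy => sq_sqrt (jsAtom_nonneg hx hy)
  calc √(binJSD p r) = √(jsAtom p r + jsAtom (1 - p) (1 - r)) / √2 := sqrt_div' _ zero_le_two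
    _ ≤ √((√(jsAtom p q) + √(jsAtom q r)) ^ 2 +
          (√(jsAtom (1 - p) (1 - q)) + √(jsAtom (1 - q) (1 - r))) ^ 2) / √2 := by
        gcongr
        exacts [jsAtom_le_sq_sqrt_add hp.1 hq.1 hr.1, jsAtom_le_sq_sqrt_add hp' hq' hr']
    _ ≤ (√(jsAtom p q + jsAtom (1 - p) (1 - q)) + √(jsAtom q r + jsAtom (1 - q) (1 - r))) / √2 := by
        gcongr
        have h := sqrt_add_sq_add_sq_le √(jsAtom p q) √(jsAtom q r) √(jsAtom (1 - p) (1 - q))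
          √(jsAtom (1 - q) (1 - r))
        rwa [hsq hp.1 hq.1, hsq hp' hq', hsq hq.1 hr.1, hsq hq' hr'] at h
    _ = √(binJSD p q) + √(binJSD q r) := by
        rw [add_div, binJSD, binJSD, sqrt_div' _ zero_le_two, sqrt_div' _ zero_le_two]

section DataProcessing

variable {α β : Type*} [MeasurableSpace α] [MeasurableSpace β] {P Q : Measure α}

-- Without integrability of `llr P Q` both sides are junk `0`: the Bochner integral and `(∞).toReal`.
lemma klDiv_eq_toReal_klDiv [IsFiniteMeasure P] [IsFiniteMeasure Q] (hPQ : P ≪ Q)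
    (h : P univ = Q univ) : klDiv P Q = (InformationTheory.klDiv P Q).toReal :=
  (InformationTheory.toReal_klDiv_of_measure_eq hPQ h).symm

lemma klFun_le_of_mem_Icc {c x : ℝ} (hx : x ∈ Icc 0 c) :
    InformationTheory.klFun x ≤ max 1 (InformationTheory.klFun c) := by
  have h := InformationTheory.convexOn_klFun.le_on_segment (mem_Ici.2 le_rfl)
    (mem_Ici.2 (hx.1.trans hx.2)) (by rwa [segment_eq_Icc (hx.1.trans hx.2)])
  rwa [InformationTheory.klFun_zero] at h

lemma klDiv_ne_top_of_rnDeriv_le [IsFiniteMeasure P] [IsFiniteMeasure Q] {c : ℝ} (hPQ : P ≪ Q)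
    (hc : ∀ᵐ x ∂Q, (P.rnDeriv Q x).toReal ≤ c) : InformationTheory.klDiv P Q ≠ ∞ := by
  rw [InformationTheory.klDiv_eq_lintegral_klFun_of_ac hPQ]
  refine ne_top_of_le_ne_top (lintegral_const_lt_top (μ := Q)
    (ENNReal.ofReal_ne_top (r := max 1 (InformationTheory.klFun c)))).ne (lintegral_mono_ae ?_)
  filter_upwards [hc] with x hx
  exact ENNReal.ofReal_le_ofReal (klFun_le_of_mem_Icc ⟨ENNReal.toReal_nonneg, hx⟩)

lemma rnDeriv_le_of_le_smul [IsFiniteMeasure P] [IsFiniteMeasure Q] {c : ℝ≥0∞} (hc0 : c ≠ 0)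
    (hc : c ≠ ∞) (h : P ≤ c • Q) : ∀ᵐ x ∂Q, P.rnDeriv Q x ≤ c := by
  have := Q.smul_finite hc
  have h1 : P.rnDeriv (c • Q) ≤ᵐ[Q] 1 :=
    (Measure.absolutelyContinuous_smul hc0).ae_le (Measure.rnDeriv_le_one_of_le h)
  filter_upwards [h1, Measure.rnDeriv_smul_right_of_ne_top' P Q hc0 hc] with x h1 h2
  rw [h2, Pi.smul_apply, Pi.one_apply, smul_eq_mul] at h1
  rwa [ENNReal.inv_mul_le_iff hc0 hc, mul_one] at h1

variable (P Q)

instance isProbabilityMeasure_mixture [IsProbabilityMeasure P] [IsProbabilityMeasure Q] :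
    IsProbabilityMeasure ((2 : ℝ≥0∞)⁻¹ • (P + Q)) := by
  constructor
  simp [ENNReal.inv_two_add_inv_two]

lemma absolutelyContinuous_mixture : P ≪ (2 : ℝ≥0∞)⁻¹ • (P + Q) :=
  (Measure.AbsolutelyContinuous.rfl.add_right Q).trans
    (Measure.absolutelyContinuous_smul (by simp))

lemma klDiv_mixture_ne_top [IsProbabilityMeasure P] [IsProbabilityMeasure Q] :
    InformationTheory.klDiv P ((2 : ℝ≥0∞)⁻¹ • (P + Q)) ≠ ∞ := by
  refine klDiv_ne_top_of_rnDeriv_le (c := 2) (absolutelyContinuous_mixture P Q) ?_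
  have h : P ≤ (2 : ℝ≥0∞) • ((2 : ℝ≥0∞)⁻¹ • (P + Q)) := by
    rw [smul_smul, ENNReal.mul_inv_cancel two_ne_zero ENNReal.ofNat_ne_top, one_smul]
    exact Measure.le_add_right le_rfl
  filter_upwards [rnDeriv_le_of_le_smul two_ne_zero ENNReal.ofNat_ne_top h] with x hx
  simpa using ENNReal.toReal_mono (by simp) hx

lemma JSD_eq_toReal_klDiv [IsProbabilityMeasure P] [IsProbabilityMeasure Q] :
    JSD P Q = ((InformationTheory.klDiv P ((2 : ℝ≥0∞)⁻¹ • (P + Q))).toReal +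
      (InformationTheory.klDiv Q ((2 : ℝ≥0∞)⁻¹ • (P + Q))).toReal) / 2 := by
  rw [JSD, klDiv_eq_toReal_klDiv (absolutelyContinuous_mixture P Q) (by simp only [measure_univ]),
    klDiv_eq_toReal_klDiv (add_comm P Q ▸ absolutelyContinuous_mixture Q P)
      (by simp only [measure_univ])]

lemma JSD_map_le [IsProbabilityMeasure P] [IsProbabilityMeasure Q] {f : α → β}
    (hf : Measurable f) : JSD (P.map f) (Q.map f) ≤ JSD P Q := by
  have := Measure.isProbabilityMeasure_map (μ := P) hf.aemeasurable
  have := Measure.isProbabilityMeasure_map (μ := Q) hf.aemeasurable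
  have hM : (2 : ℝ≥0∞)⁻¹ • (P.map f + Q.map f) = ((2 : ℝ≥0∞)⁻¹ • (P + Q)).map f := by
    rw [Measure.map_smul, Measure.map_add _ _ hf]
  rw [JSD_eq_toReal_klDiv, JSD_eq_toReal_klDiv, hM]
  gcongr
  · exact klDiv_mixture_ne_top P Q
  · exact InformationTheory.klDiv_map_le _ _ hf
  · exact add_comm P Q ▸ klDiv_mixture_ne_top Q P
  · exact InformationTheory.klDiv_map_le _ _ hf

end DataProcessing

section Bernoulli

noncomputable def bernoulliMeasure (p : ℝ) : Measure ℝ :=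
  ENNReal.ofReal p • Measure.dirac 1 + ENNReal.ofReal (1 - p) • Measure.dirac 0

lemma map_eq_bernoulliMeasure {Ω : Type*} [MeasurableSpace Ω] (μ : Measure Ω)
    [IsProbabilityMeasure μ] {Y : Ω → ℝ} (hY : Measurable Y) (hY01 : ∀ ω, Y ω = 0 ∨ Y ω = 1) :
    μ.map Y = bernoulliMeasure (μ.real (Y ⁻¹' {1})) := by
  have hA : MeasurableSet (Y ⁻¹' {1}) := hY (measurableSet_singleton 1)
  ext s hs
  rw [Measure.map_apply hY hs, bernoulliMeasure, ← probReal_compl_eq_one_sub hA, ofReal_measureReal,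
    ofReal_measureReal, Measure.add_apply, Measure.smul_apply, Measure.smul_apply,
    Measure.dirac_apply' _ hs, Measure.dirac_apply' _ hs, smul_eq_mul, smul_eq_mul]
  have hpre : ∀ ω, Y ω ∈ s ↔ (Y ω = 1 ∧ (1 : ℝ) ∈ s) ∨ (Y ω ≠ 1 ∧ (0 : ℝ) ∈ s) := fun ω => by
    rcases hY01 ω with h | h <;> simp [h]
  by_cases h1 : (1 : ℝ) ∈ s <;> by_cases h0 : (0 : ℝ) ∈ s <;>
    simp only [indicator_of_mem, indicator_of_notMem, h0, h1, Pi.one_apply, mul_one, mul_zero,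
      add_zero, zero_add, not_false_eq_true]
  · rw [measure_add_measure_compl hA]
    congr 1
    ext ω
    simp [hpre, h0, h1, em]
  · congr 1
    ext ω
    simp [hpre, h0, h1]
  · congr 1
    ext ω
    simp [hpre, h0, h1]
  · rw [show Y ⁻¹' s = ∅ by ext ω; simp [hpre, h0, h1], measure_empty]

lemma isProbabilityMeasure_bernoulliMeasure {p : ℝ} (hp : p ∈ Icc (0 : ℝ) 1) :
    IsProbabilityMeasure (bernoulliMeasure p) := by
  constructor
  simp [bernoulliMeasure, ← ENNReal.ofReal_add hp.1 (sub_nonneg.2 hp.2)]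

lemma ofReal_add_div_two {a b : ℝ} (ha : 0 ≤ a) (hb : 0 ≤ b) :
    ENNReal.ofReal ((a + b) / 2) = (2 : ℝ≥0∞)⁻¹ * (ENNReal.ofReal a + ENNReal.ofReal b) := by
  rw [← ENNReal.ofReal_add ha hb, div_eq_inv_mul, ENNReal.ofReal_mul (by norm_num),
    ENNReal.ofReal_inv_of_pos two_pos, ENNReal.ofReal_ofNat]

lemma mixture_bernoulliMeasure {p q : ℝ} (hp : p ∈ Icc (0 : ℝ) 1) (hq : q ∈ Icc (0 : ℝ) 1) :
    (2 : ℝ≥0∞)⁻¹ • (bernoulliMeasure p + bernoulliMeasure q) = bernoulliMeasure ((p + q) / 2) := by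
  rw [bernoulliMeasure, bernoulliMeasure, bernoulliMeasure, ofReal_add_div_two hp.1 hq.1,
    show 1 - (p + q) / 2 = (1 - p + (1 - q)) / 2 by ring,
    ofReal_add_div_two (sub_nonneg.2 hp.2) (sub_nonneg.2 hq.2)]
  simp only [smul_add, ← smul_smul, add_smul]
  abel

lemma bernoulliMeasure_eq_withDensity {p m : ℝ} (hm : m ∈ Icc (0 : ℝ) 1) (h0 : m = 0 → p = 0)
    (h1 : m = 1 → p = 1) :
    bernoulliMeasure p = (bernoulliMeasure m).withDensity
      fun x => ENNReal.ofReal (if x = 1 then p / m else (1 - p) / (1 - m)) := by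
  have hcancel : ∀ {a b : ℝ}, (a = 0 → b = 0) → a * (b / a) = b := fun {a b} h => by
    rcases eq_or_ne a 0 with ha | ha
    · simp [ha, h ha]
    · field_simp
  rw [bernoulliMeasure, bernoulliMeasure, withDensity_add_measure, withDensity_smul_measure,
    withDensity_smul_measure, dirac_withDensity, dirac_withDensity, smul_smul, smul_smul,
    ← ENNReal.ofReal_mul hm.1, ← ENNReal.ofReal_mul (sub_nonneg.2 hm.2)]
  simp only [ite_true, zero_ne_one, ite_false]
  rw [hcancel h0, hcancel fun h => by linarith [h1 (by linarith)]]

lemma klDiv_bernoulliMeasure {p m : ℝ} (hp : p ∈ Icc (0 : ℝ) 1) (hm : m ∈ Icc (0 : ℝ) 1)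
    (h0 : m = 0 → p = 0) (h1 : m = 1 → p = 1) :
    klDiv (bernoulliMeasure p) (bernoulliMeasure m) =
      p * log (p / m) + (1 - p) * log ((1 - p) / (1 - m)) := by
  set d : ℝ → ℝ := fun x => if x = 1 then p / m else (1 - p) / (1 - m) with hd
  have hd0 : ∀ x, 0 ≤ d x := fun x => by
    simp only [hd]
    split_ifs
    exacts [div_nonneg hp.1 hm.1, div_nonneg (sub_nonneg.2 hp.2) (sub_nonneg.2 hm.2)]
  have hdm : Measurable fun x => ENNReal.ofReal (d x) := ENNReal.measurable_ofReal.comp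
    (measurable_const.ite (measurableSet_singleton 1) measurable_const)
  have hwd := bernoulliMeasure_eq_withDensity hm h0 h1
  have := isProbabilityMeasure_bernoulliMeasure hm
  have hac : bernoulliMeasure p ≪ bernoulliMeasure m := hwd ▸ withDensity_absolutelyContinuous _ _
  have hrn := Measure.rnDeriv_withDensity (bernoulliMeasure m) hdm
  rw [← hwd] at hrn
  have hlog : (fun x => log ((bernoulliMeasure p).rnDeriv (bernoulliMeasure m) x).toReal)
      =ᵐ[bernoulliMeasure p] fun x => log (d x) := by
    filter_upwards [hac.ae_le hrn] with x hx
    rw [hx, ENNReal.toReal_ofReal (hd0 x)]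
  rw [klDiv, integral_congr_ae hlog, bernoulliMeasure, integral_add_measure,
    integral_smul_measure, integral_smul_measure, integral_dirac, integral_dirac]
  · simp [hd, ENNReal.toReal_ofReal hp.1, ENNReal.toReal_ofReal (sub_nonneg.2 hp.2)]
  all_goals exact (integrable_dirac enorm_lt_top).smul_measure ENNReal.ofReal_ne_top

lemma JSD_bernoulliMeasure {p q : ℝ} (hp : p ∈ Icc (0 : ℝ) 1) (hq : q ∈ Icc (0 : ℝ) 1) :
    JSD (bernoulliMeasure p) (bernoulliMeasure q) = binJSD p q := by
  have hm : (p + q) / 2 ∈ Icc (0 : ℝ) 1 := ⟨by linarith [hp.1, hq.1], by linarith [hp.2, hq.2]⟩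
  rw [JSD, mixture_bernoulliMeasure hp hq,
    klDiv_bernoulliMeasure hp hm (fun h => by linarith [hp.1, hq.1])
      (fun h => by linarith [hp.2, hq.2]),
    klDiv_bernoulliMeasure hq hm (fun h => by linarith [hp.1, hq.1])
      (fun h => by linarith [hp.2, hq.2]),
    show 1 - (p + q) / 2 = (1 - p + (1 - q)) / 2 by ring, binJSD,
    ← mul_log_div_add_mul_log_div hp.1 hq.1,
    ← mul_log_div_add_mul_log_div (sub_nonneg.2 hp.2) (sub_nonneg.2 hq.2)]
  ring

lemma measureReal_mem_Icc {Ω : Type*} [MeasurableSpace Ω] (μ : Measure Ω) [IsProbabilityMeasure μ]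
    (s : Set Ω) : μ.real s ∈ Icc (0 : ℝ) 1 :=
  ⟨measureReal_nonneg, measureReal_le_one⟩

lemma JSD_map_eq_binJSD {Ω : Type*} [MeasurableSpace Ω] (μ₀ μ₁ : Measure Ω)
    [IsProbabilityMeasure μ₀] [IsProbabilityMeasure μ₁] {Y : Ω → ℝ} (hY : Measurable Y)
    (hY01 : ∀ ω, Y ω = 0 ∨ Y ω = 1) :
    JSD (μ₀.map Y) (μ₁.map Y) = binJSD (μ₀.real (Y ⁻¹' {1})) (μ₁.real (Y ⁻¹' {1})) := by
  rw [map_eq_bernoulliMeasure μ₀ hY hY01, map_eq_bernoulliMeasure μ₁ hY hY01,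
    JSD_bernoulliMeasure (measureReal_mem_Icc μ₀ _) (measureReal_mem_Icc μ₁ _)]

end Bernoulli

lemma integral_eq_measureReal_preimage_one {Ω : Type*} [MeasurableSpace Ω] (μ : Measure Ω)
    [IsFiniteMeasure μ] {Y : Ω → ℝ} (hY : Measurable Y) (hY01 : ∀ ω, Y ω = 0 ∨ Y ω = 1) :
    Integrable Y μ ∧ ∫ ω, Y ω ∂μ = μ.real (Y ⁻¹' {1}) := by
  have hA : MeasurableSet (Y ⁻¹' {1}) := hY (measurableSet_singleton 1)
  have hY' : ∀ ω, Y ω = (Y ⁻¹' {1}).indicator 1 ω := fun ω => by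
    rcases hY01 ω with h | h <;> simp [h]
  refine ⟨((integrable_const 1).indicator hA).congr (ae_of_all _ fun ω => (hY' ω).symm), ?_⟩
  rw [integral_congr_ae (ae_of_all _ hY'), integral_indicator_one hA]

lemma abs_sub_measureReal_le_integral_abs_sub {Ω : Type*} [MeasurableSpace Ω] (μ : Measure Ω)
    [IsFiniteMeasure μ] {Y Z : Ω → ℝ} (hY : Measurable Y) (hZ : Measurable Z)
    (hY01 : ∀ ω, Y ω = 0 ∨ Y ω = 1) (hZ01 : ∀ ω, Z ω = 0 ∨ Z ω = 1) :
    |μ.real (Y ⁻¹' {1}) - μ.real (Z ⁻¹' {1})| ≤ ∫ ω, |Y ω - Z ω| ∂μ := by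
  obtain ⟨hYi, hYe⟩ := integral_eq_measureReal_preimage_one μ hY hY01
  obtain ⟨hZi, hZe⟩ := integral_eq_measureReal_preimage_one μ hZ hZ01
  rw [← hYe, ← hZe, ← integral_sub hYi hZi]
  exact abs_integral_le_integral_abs

lemma binJSD_le_integral_abs_sub {Ω : Type*} [MeasurableSpace Ω] (μ : Measure Ω)
    [IsProbabilityMeasure μ] {Y Z : Ω → ℝ} (hY : Measurable Y) (hZ : Measurable Z)
    (hY01 : ∀ ω, Y ω = 0 ∨ Y ω = 1) (hZ01 : ∀ ω, Z ω = 0 ∨ Z ω = 1) :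
    binJSD (μ.real (Y ⁻¹' {1})) (μ.real (Z ⁻¹' {1})) ≤ ∫ ω, |Y ω - Z ω| ∂μ :=
  (binJSD_le_abs_sub (measureReal_mem_Icc μ _) (measureReal_mem_Icc μ _)).trans
    (abs_sub_measureReal_le_integral_abs_sub μ hY hZ hY01 hZ01)

lemma sq_sub_div_two_le_add {d d' e₀ e₁ : ℝ} (he₀ : 0 ≤ e₀) (he₁ : 0 ≤ e₁) (hd : d' ≤ d)
    (h : d ≤ √e₀ + d' + √e₁) : (d - d') ^ 2 / 2 ≤ e₀ + e₁ := by
  have h' : (d - d') ^ 2 ≤ (√e₀ + √e₁) ^ 2 := pow_le_pow_left₀ (by linarith) (by linarith) 2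
  nlinarith [sq_sqrt he₀, sq_sqrt he₁, sq_nonneg (√e₀ - √e₁)]

/-- **Jensen–Shannon lower bound** (Theorem 3.2, second inequality). -/
theorem js_lower_bound_fair_representation
    {Ω 𝒵 : Type*} [MeasurableSpace Ω] [MeasurableSpace 𝒵]
    (μ₀ μ₁ : Measure Ω) [IsProbabilityMeasure μ₀] [IsProbabilityMeasure μ₁]
    (Y : Ω → ℝ) (g : Ω → 𝒵) (h : 𝒵 → ℝ)
    (hY : Measurable Y) (hg : Measurable g) (hh : Measurable h)
    (hY01 : ∀ ω, Y ω = 0 ∨ Y ω = 1) (hh01 : ∀ z, h z = 0 ∨ h z = 1)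
    (hJS : dJS (Measure.map g μ₀) (Measure.map g μ₁) ≤
      dJS (Measure.map Y μ₀) (Measure.map Y μ₁)) :
    (∫ ω, |Y ω - h (g ω)| ∂μ₀) + (∫ ω, |Y ω - h (g ω)| ∂μ₁) ≥
      (dJS (Measure.map Y μ₀) (Measure.map Y μ₁) -
        dJS (Measure.map g μ₀) (Measure.map g μ₁)) ^ 2 / 2 := by
  have hŶ : Measurable (h ∘ g) := hh.comp hg
  have hŶ01 : ∀ ω, (h ∘ g) ω = 0 ∨ (h ∘ g) ω = 1 := fun ω => hh01 (g ω)
  have := Measure.isProbabilityMeasure_map (μ := μ₀) hg.aemeasurable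
  have := Measure.isProbabilityMeasure_map (μ := μ₁) hg.aemeasurable
  have hp₀ := measureReal_mem_Icc μ₀ (Y ⁻¹' {1})
  have hp₁ := measureReal_mem_Icc μ₁ (Y ⁻¹' {1})
  have hq₀ := measureReal_mem_Icc μ₀ ((h ∘ g) ⁻¹' {1})
  have hq₁ := measureReal_mem_Icc μ₁ ((h ∘ g) ⁻¹' {1})
  have hdŶ : √(binJSD (μ₀.real ((h ∘ g) ⁻¹' {1})) (μ₁.real ((h ∘ g) ⁻¹' {1}))) ≤
      dJS (μ₀.map g) (μ₁.map g) := by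
    rw [dJS, ← JSD_map_eq_binJSD μ₀ μ₁ hŶ hŶ01, ← Measure.map_map hh hg, ← Measure.map_map hh hg]
    exact sqrt_le_sqrt (JSD_map_le _ _ hh)
  refine sq_sub_div_two_le_add (integral_nonneg fun _ => abs_nonneg _)
    (integral_nonneg fun _ => abs_nonneg _) hJS ?_
  rw [dJS, JSD_map_eq_binJSD μ₀ μ₁ hY hY01]
  have herr₀ := sqrt_le_sqrt (binJSD_le_integral_abs_sub μ₀ hY hŶ hY01 hŶ01)
  have herr₁ := sqrt_le_sqrt (binJSD_le_integral_abs_sub μ₁ hY hŶ hY01 hŶ01)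
  rw [binJSD_comm] at herr₁
  simp only [Function.comp_apply] at herr₀ herr₁
  linarith [sqrt_binJSD_triangle hp₀ hq₀ hp₁, sqrt_binJSD_triangle hq₀ hq₁ hp₁]
end

section
/- Let μ₀ and μ₁ be probability measures on a measurable space Ω, let Y : Ω → ℝ be a measurable label taking values in {0,1}, and let Ŷ : Ω → ℝ be any measurable predictor taking values in {0,1}. Then err₀(Ŷ) + err₁(Ŷ) ≥ |μ₀{Y = 1} − μ₁{Y = 1}| − |μ₀{Ŷ = 1} − μ₁{Ŷ = 1}|. -/
open MeasureTheory

/- Each group error dominates the gap between the base rate and the positive rate in that group,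
since it is the integral of `|Y - Ŷ|` while the gap is the absolute value of the integral of
`Y - Ŷ`. The triangle inequality through the positive rates of the two groups then turns these
two bounds into the claim. -/

lemma eq_indicator_one_of_zero_or_one_s6 {Ω : Type*} {Z : Ω → ℝ}
    (hZ01 : ∀ ω, Z ω = 0 ∨ Z ω = 1) : Z = {ω | Z ω = 1}.indicator 1 := by
  funext ω
  rcases hZ01 ω with h | h <;> simp [h]

section ZeroOne

variable {Ω : Type*} [MeasurableSpace Ω] {μ : Measure Ω} {Z : Ω → ℝ}

lemma integral_eq_measureReal_of_zero_or_one_s6 (hZ : Measurable Z)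
    (hZ01 : ∀ ω, Z ω = 0 ∨ Z ω = 1) :
    ∫ ω, Z ω ∂μ = μ.real {ω | Z ω = 1} :=
  calc ∫ ω, Z ω ∂μ = ∫ ω, {ω | Z ω = 1}.indicator (fun _ ↦ (1 : ℝ)) ω ∂μ := by
        rw [← Pi.one_def, ← eq_indicator_one_of_zero_or_one_s6 hZ01]
    _ = μ.real {ω | Z ω = 1} := by
        rw [integral_indicator_const _ (measurableSet_eq_fun hZ measurable_const),
          smul_eq_mul, mul_one]

lemma integrable_of_zero_or_one_s6 [IsFiniteMeasure μ] (hZ : Measurable Z)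
    (hZ01 : ∀ ω, Z ω = 0 ∨ Z ω = 1) : Integrable Z μ := by
  rw [eq_indicator_one_of_zero_or_one_s6 hZ01]
  exact (integrable_const 1).indicator (hZ (measurableSet_singleton 1))

lemma abs_measureReal_sub_le_integral_abs_sub [IsFiniteMeasure μ] {Y Yhat : Ω → ℝ}
    (hY : Measurable Y) (hYhat : Measurable Yhat)
    (hY01 : ∀ ω, Y ω = 0 ∨ Y ω = 1) (hYhat01 : ∀ ω, Yhat ω = 0 ∨ Yhat ω = 1) :
    |μ.real {ω | Y ω = 1} - μ.real {ω | Yhat ω = 1}| ≤ ∫ ω, |Y ω - Yhat ω| ∂μ :=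
  calc |μ.real {ω | Y ω = 1} - μ.real {ω | Yhat ω = 1}|
      = |∫ ω, (Y ω - Yhat ω) ∂μ| := by
        rw [integral_sub (integrable_of_zero_or_one_s6 hY hY01)
          (integrable_of_zero_or_one_s6 hYhat hYhat01),
          integral_eq_measureReal_of_zero_or_one_s6 hY hY01,
          integral_eq_measureReal_of_zero_or_one_s6 hYhat hYhat01]
    _ ≤ ∫ ω, |Y ω - Yhat ω| ∂μ := abs_integral_le_integral_abs

end ZeroOne

/-- **Corollary 3.4.** For any binary predictor `Yhat`, the sum of the group-wise
errors is lower bounded by the base-rate gap minus the demographic parity gap. -/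
theorem error_lower_bound_dp_gap
    {Ω : Type*} [MeasurableSpace Ω]
    (μ₀ μ₁ : Measure Ω) [IsProbabilityMeasure μ₀] [IsProbabilityMeasure μ₁]
    (Y Yhat : Ω → ℝ) (hY : Measurable Y) (hYhat : Measurable Yhat)
    (hY01 : ∀ ω, Y ω = 0 ∨ Y ω = 1) (hYhat01 : ∀ ω, Yhat ω = 0 ∨ Yhat ω = 1) :
    (∫ ω, |Y ω - Yhat ω| ∂μ₀) + (∫ ω, |Y ω - Yhat ω| ∂μ₁) ≥
      |(μ₀ {ω | Y ω = 1}).toReal - (μ₁ {ω | Y ω = 1}).toReal| -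
        |(μ₀ {ω | Yhat ω = 1}).toReal - (μ₁ {ω | Yhat ω = 1}).toReal| := by
  have err₀ := abs_measureReal_sub_le_integral_abs_sub (μ := μ₀) hY hYhat hY01 hYhat01
  have err₁ := abs_measureReal_sub_le_integral_abs_sub (μ := μ₁) hY hYhat hY01 hYhat01
  simp only [measureReal_def] at err₀ err₁
  set base₀ := (μ₀ {ω | Y ω = 1}).toReal
  set base₁ := (μ₁ {ω | Y ω = 1}).toReal
  set pos₀ := (μ₀ {ω | Yhat ω = 1}).toReal
  set pos₁ := (μ₁ {ω | Yhat ω = 1}).toReal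
  have tri : |base₀ - base₁| ≤ |base₀ - pos₀| + |pos₀ - pos₁| + |base₁ - pos₁| :=
    calc |base₀ - base₁| ≤ |base₀ - pos₀| + |pos₀ - base₁| := abs_sub_le _ _ _
      _ ≤ |base₀ - pos₀| + (|pos₀ - pos₁| + |pos₁ - base₁|) := by gcongr; exact abs_sub_le _ _ _
      _ = |base₀ - pos₀| + |pos₀ - pos₁| + |base₁ - pos₁| := by rw [abs_sub_comm pos₁]; ring
  linarith
end

section
/- Let 𝒳 be a measurable space and let μ₀ and μ₁ be probability measures on 𝒳 × ℝ (the group-conditional joint distributions of input and label), supported on labels in {0,1}. Let h, h₀*, h₁* : 𝒳 → ℝ be measurable functions taking values in {0,1}, and for a ∈ {0,1} define the noise n_a = ∫ |y − h_a*(x)| dμ_a(x, y), the error err_a(h) = ∫ |y − h(x)| dμ_a(x, y), and let ν_a be the marginal of μ_a on 𝒳 (the pushforward under the first projection). Then |err₀(h) − err₁(h)| ≤ (n₀ + n₁) + dTV(ν₀, ν₁) + min{ ∫ |h₀*(x) − h₁*(x)| dν₀(x), ∫ |h₀*(x) − h₁*(x)| dν₁(x) }. -/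
/-!
The accuracy gap is split along the chain
`err₀(h) ≈ d_{ν₀}(h₀, h) ≈ d_{ν₀}(h₁, h) ≈ d_{ν₁}(h₁, h) ≈ err₁(h)`,
where `d_ν(f, g) = ∫ |f - g| dν` is the disagreement of two classifiers under an input
distribution. Each link is a triangle inequality for `∫ |· - ·|`, except the third: for
`{0,1}`-valued `f, g` the integrand `|f - g|` is the indicator of `{f ≠ g}`, so moving from `ν₀`
to `ν₁` costs at most `dTV(ν₀, ν₁)`. Going through `d_{ν₁}(h₀, h)` instead gives the same bound
with `d_{ν₁}(h₀, h₁)`, whence the minimum.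
-/

open MeasureTheory

/-- Total variation distance between two measures:
the supremum over measurable sets of the absolute difference of the probabilities. -/
noncomputable def dTV {Ω : Type*} [MeasurableSpace Ω] (P Q : Measure Ω) : ℝ :=
  ⨆ E : {E : Set Ω // MeasurableSet E}, |(P E.1).toReal - (Q E.1).toReal|

section TotalVariation

variable {Ω : Type*} [MeasurableSpace Ω]

lemma abs_measureReal_sub_le_dTV (P Q : Measure Ω) [IsFiniteMeasure P] [IsFiniteMeasure Q]
    {E : Set Ω} (hE : MeasurableSet E) : |P.real E - Q.real E| ≤ dTV P Q := by
  refine le_ciSup (f := fun E : {E : Set Ω // MeasurableSet E} => |P.real E.1 - Q.real E.1|)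
    ⟨P.real Set.univ + Q.real Set.univ, ?_⟩ ⟨E, hE⟩
  rintro _ ⟨F, rfl⟩
  calc |P.real F.1 - Q.real F.1| ≤ |P.real F.1| + |Q.real F.1| := abs_sub _ _
    _ ≤ P.real Set.univ + Q.real Set.univ := by
      rw [abs_of_nonneg measureReal_nonneg, abs_of_nonneg measureReal_nonneg]
      gcongr <;> simp

lemma abs_sub_eq_ite_ne {a b : ℝ} (ha : a = 0 ∨ a = 1) (hb : b = 0 ∨ b = 1) :
    |a - b| = if a ≠ b then 1 else 0 := by
  rcases ha with rfl | rfl <;> rcases hb with rfl | rfl <;> norm_num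

lemma integral_abs_sub_eq_measureReal_ne (P : Measure Ω) {f g : Ω → ℝ} (hf : Measurable f)
    (hg : Measurable g) (hf01 : ∀ x, f x = 0 ∨ f x = 1) (hg01 : ∀ x, g x = 0 ∨ g x = 1) :
    ∫ x, |f x - g x| ∂P = P.real {x | f x ≠ g x} := by
  have hne : MeasurableSet {x | f x ≠ g x} := (measurableSet_eq_fun hf hg).compl
  rw [← integral_indicator_one hne]
  congr 1 with x
  simp only [abs_sub_eq_ite_ne (hf01 x) (hg01 x), Set.indicator_apply, Set.mem_ofPred_eq,
    Pi.one_apply]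

lemma abs_integral_abs_sub_sub_le_dTV (P Q : Measure Ω) [IsFiniteMeasure P] [IsFiniteMeasure Q]
    {f g : Ω → ℝ} (hf : Measurable f) (hg : Measurable g) (hf01 : ∀ x, f x = 0 ∨ f x = 1)
    (hg01 : ∀ x, g x = 0 ∨ g x = 1) :
    |∫ x, |f x - g x| ∂P - ∫ x, |f x - g x| ∂Q| ≤ dTV P Q := by
  rw [integral_abs_sub_eq_measureReal_ne P hf hg hf01 hg01,
    integral_abs_sub_eq_measureReal_ne Q hf hg hf01 hg01]
  exact abs_measureReal_sub_le_dTV P Q (measurableSet_eq_fun hf hg).compl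

end TotalVariation

section Disagreement

variable {α : Type*} [MeasurableSpace α] {μ : Measure α}

lemma integrable_of_ae_eq_zero_or_eq_one [IsFiniteMeasure μ] {f : α → ℝ} (hf : Measurable f)
    (h01 : ∀ᵐ x ∂μ, f x = 0 ∨ f x = 1) : Integrable f μ := by
  refine .of_bound hf.aestronglyMeasurable 1 ?_
  filter_upwards [h01] with x hx
  rcases hx with hx | hx <;> simp [hx]

lemma abs_integral_abs_sub_sub_integral_abs_sub_le {u v w : α → ℝ} (hu : Integrable u μ)
    (hv : Integrable v μ) (hw : Integrable w μ) :
    |∫ x, |u x - w x| ∂μ - ∫ x, |v x - w x| ∂μ| ≤ ∫ x, |u x - v x| ∂μ := by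
  have huw : Integrable (fun x => |u x - w x|) μ := (hu.sub hw).abs
  have hvw : Integrable (fun x => |v x - w x|) μ := (hv.sub hw).abs
  rw [← integral_sub huw hvw]
  refine abs_integral_le_integral_abs.trans
    (integral_mono (huw.sub hvw).abs (hu.sub hv).abs fun x => ?_)
  simpa using abs_abs_sub_abs_le_abs_sub (u x - w x) (v x - w x)

lemma abs_integral_abs_snd_sub_sub_integral_map_fst_le {X : Type*} [MeasurableSpace X]
    {μ : Measure (X × ℝ)} {f g : X → ℝ} (hy : Integrable Prod.snd μ)
    (hf : Integrable f (μ.map Prod.fst)) (hg : Integrable g (μ.map Prod.fst)) :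
    |∫ p, |p.2 - f p.1| ∂μ - ∫ x, |g x - f x| ∂(μ.map Prod.fst)| ≤
      ∫ p, |p.2 - g p.1| ∂μ := by
  rw [integral_map (f := fun x => |g x - f x|) measurable_fst.aemeasurable
    (hg.sub hf).abs.aestronglyMeasurable]
  exact abs_integral_abs_sub_sub_integral_abs_sub_le hy (hg.comp_measurable measurable_fst)
    (hf.comp_measurable measurable_fst)

lemma integrable_snd_of_label_eq_zero_or_eq_one {X : Type*} [MeasurableSpace X]
    {μ : Measure (X × ℝ)} [IsProbabilityMeasure μ] (hsupp : μ {p | p.2 = 0 ∨ p.2 = 1} = 1) :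
    Integrable Prod.snd μ :=
  integrable_of_ae_eq_zero_or_eq_one measurable_snd <| (ae_iff_prob_eq_one <|
    (measurable_snd.eq_const 0).or (measurable_snd.eq_const 1)).2 hsupp

end Disagreement

/-- **Error Decomposition Theorem** (Theorem 3.3). The accuracy disparity of a
classifier `h` across two groups is bounded by the sum of the group-wise noises,
the total variation distance between the group marginal input distributions, and
the minimal discrepancy between the optimal decision functions of the two groups. -/
theorem error_decomposition
    {𝒳 : Type*} [MeasurableSpace 𝒳]
    (μ₀ μ₁ : Measure (𝒳 × ℝ)) [IsProbabilityMeasure μ₀] [IsProbabilityMeasure μ₁]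
    (hsupp₀ : μ₀ {p | p.2 = 0 ∨ p.2 = 1} = 1) (hsupp₁ : μ₁ {p | p.2 = 0 ∨ p.2 = 1} = 1)
    (h h₀ h₁ : 𝒳 → ℝ) (hh : Measurable h) (hh₀ : Measurable h₀) (hh₁ : Measurable h₁)
    (hh01 : ∀ x, h x = 0 ∨ h x = 1) (hh₀01 : ∀ x, h₀ x = 0 ∨ h₀ x = 1)
    (hh₁01 : ∀ x, h₁ x = 0 ∨ h₁ x = 1) :
    |(∫ p, |p.2 - h p.1| ∂μ₀) - ∫ p, |p.2 - h p.1| ∂μ₁| ≤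
      ((∫ p, |p.2 - h₀ p.1| ∂μ₀) + ∫ p, |p.2 - h₁ p.1| ∂μ₁) +
        dTV (Measure.map Prod.fst μ₀) (Measure.map Prod.fst μ₁) +
        min (∫ x, |h₀ x - h₁ x| ∂(Measure.map Prod.fst μ₀))
          (∫ x, |h₀ x - h₁ x| ∂(Measure.map Prod.fst μ₁)) := by
  have hint : ∀ {ν : Measure 𝒳} [IsFiniteMeasure ν] {f : 𝒳 → ℝ}, Measurable f →
      (∀ x, f x = 0 ∨ f x = 1) → Integrable f ν := fun hf h01 =>
    integrable_of_ae_eq_zero_or_eq_one hf (.of_forall h01)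
  have noise₀ := abs_integral_abs_snd_sub_sub_integral_map_fst_le
    (integrable_snd_of_label_eq_zero_or_eq_one hsupp₀) (hint hh hh01) (hint hh₀ hh₀01)
  have noise₁ := abs_integral_abs_snd_sub_sub_integral_map_fst_le
    (integrable_snd_of_label_eq_zero_or_eq_one hsupp₁) (hint hh hh01) (hint hh₁ hh₁01)
  have shift₀ := abs_integral_abs_sub_sub_le_dTV (μ₀.map Prod.fst) (μ₁.map Prod.fst)
    hh₀ hh hh₀01 hh01
  have shift₁ := abs_integral_abs_sub_sub_le_dTV (μ₀.map Prod.fst) (μ₁.map Prod.fst)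
    hh₁ hh hh₁01 hh01
  have swap₀ := abs_integral_abs_sub_sub_integral_abs_sub_le (μ := μ₀.map Prod.fst)
    (hint hh₀ hh₀01) (hint hh₁ hh₁01) (hint hh hh01)
  have swap₁ := abs_integral_abs_sub_sub_integral_abs_sub_le (μ := μ₁.map Prod.fst)
    (hint hh₀ hh₀01) (hint hh₁ hh₁01) (hint hh hh01)
  rw [abs_le] at noise₀ noise₁ shift₀ shift₁ swap₀ swap₁
  rw [← min_add_add_left]
  refine le_min ?_ ?_ <;> rw [abs_le] <;> constructor <;> linarith
end
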